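/- Let p ∈ (1,2) and a > 0, let f = f(·,a) be the unique solution of (|f'|^{p-2} f')' + f - |f'|^{p-1} = 0 on (0,∞) with f(0) = a, f'(0) = 0, let R(a) := inf{r > 0 : f(r) = 0}, and let ψ = ψ(·,a) be defined on [0,1) by ψ(1-f(r)/a) = |f'(r)|^p/a^p. Then the function z ↦ ψ(1-z)^{-1/p} belongs to L¹(z₀,1) for every z₀ ∈ (0,1), and for every r ∈ [0,R(a)) one has the identity ∫_{f(r)/a}^{1} ψ(1-z)^{-1/p} dz = r. -/

import Mathlib

open Set Filter Topology MeasureTheory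

/-- The extinction "radius" `R = inf{r > 0 : f(r) = 0}`, as an extended real number
(`⊤` when `f` does not vanish on `(0,∞)`). -/
noncomputable def extTime (f : ℝ → ℝ) : EReal :=
  sInf {x : EReal | ∃ r : ℝ, 0 < r ∧ f r = 0 ∧ x = (r : EReal)}

/-- `f` solves `(|f'|^{p-2} f')' + f - |f'|^{p-1} = 0` on `(0,∞)` with `f(0)=a`, `f'(0)=0`;
`fd` is the derivative of `f` and `gd` the derivative of `|f'|^{p-2} f'`, both continuous
on `[0,∞)`, so that `f ∈ C¹([0,∞))` and `|f'|^{p-2} f' ∈ C¹([0,∞))`. -/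
def IsSol (p a : ℝ) (f fd gd : ℝ → ℝ) : Prop :=
  (∀ r ∈ Set.Ici (0:ℝ), HasDerivWithinAt f (fd r) (Set.Ici 0) r) ∧
  ContinuousOn fd (Set.Ici 0) ∧
  (∀ r ∈ Set.Ici (0:ℝ), HasDerivWithinAt (fun s => |fd s| ^ (p-2) * fd s) (gd r) (Set.Ici 0) r) ∧
  ContinuousOn gd (Set.Ici 0) ∧
  (∀ r ∈ Set.Ioi (0:ℝ), gd r + f r - |fd r| ^ (p-1) = 0) ∧
  f 0 = a ∧ fd 0 = 0

/-- `ψ` is the function associated with `f = f(·,a)` via `ψ(1 - f(r)/a) = |f'(r)|^p/a^p`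
for `r ∈ [0,R(a))`. -/
def PsiRel (p a : ℝ) (f fd ψ : ℝ → ℝ) : Prop :=
  ∀ r : ℝ, 0 ≤ r → (r : EReal) < extTime f → ψ (1 - f r / a) = |fd r| ^ p / a ^ p

/-!
Write `G = |f'|^{p-2} f'`. Since `|G| = |f'|^{p-1}`, the equation reads `G' = |G| - f`, so
`(e^r G)' = -e^r f` wherever `G ≤ 0`. A comparison at the boundary value `G = 0` (where
`G' = -f < 0`) keeps `G ≤ 0`, and then `e^r G` is strictly decreasing from `0`: `f' < 0` on
`(0, R)`. Hence `r ↦ f(r)/a` maps `(0, r)` injectively onto `(f(r)/a, 1)` with Jacobian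
`|f'|/a = ψ(1 - z)^{1/p}`, so after the change of variables the integrand is `1`.

For integrability up to `z₀` one needs `f < a z₀` somewhere before `R`. If `R` is finite,
`f(R) = 0`. Otherwise `f ≥ L > 0` would give `e^r G ≤ L (1 - e^r)`, hence
`f' ≤ -(L/2)^{1/(p-1)}` for `r ≥ log 2`, and `f` would become negative.
-/

open Real

section AbsODE

variable {G g f : ℝ → ℝ} {b : ℝ}

lemma nonpos_of_hasDerivWithinAt_abs_sub
    (hG : ∀ x ∈ Ici (0 : ℝ), HasDerivWithinAt G (g x) (Ici 0) x)
    (hg : ∀ x ∈ Ici (0 : ℝ), g x = |G x| - f x) (hG0 : G 0 = 0)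
    (hf : ∀ x ∈ Icc 0 b, 0 < f x) : ∀ x ∈ Icc 0 b, G x ≤ 0 := by
  refine image_le_of_deriv_right_lt_deriv_boundary
    (fun x hx => (hG x hx.1).continuousWithinAt.mono Icc_subset_Ici_self)
    (fun x hx => (hG x hx.1).mono (Ici_subset_Ici.2 hx.1)) hG0.le
    (fun _ => hasDerivAt_const _ 0) fun x hx hGx => ?_
  rw [hg x hx.1, hGx, abs_zero, zero_sub, neg_lt_zero]
  exact hf x (Ico_subset_Icc_self hx)

lemma hasDerivWithinAt_exp_mul_of_abs_sub
    (hG : ∀ x ∈ Ici (0 : ℝ), HasDerivWithinAt G (g x) (Ici 0) x)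
    (hg : ∀ x ∈ Ici (0 : ℝ), g x = |G x| - f x) (hG0 : G 0 = 0)
    (hf : ∀ x ∈ Icc 0 b, 0 < f x) {x : ℝ} (hx : x ∈ Icc 0 b) :
    HasDerivWithinAt (fun s => exp s * G s) (-(exp x * f x)) (Ici 0) x := by
  refine ((hasDerivAt_exp x).hasDerivWithinAt.mul (hG x hx.1)).congr_deriv ?_
  rw [hg x hx.1, abs_of_nonpos (nonpos_of_hasDerivWithinAt_abs_sub hG hg hG0 hf x hx)]
  ring

lemma neg_of_hasDerivWithinAt_abs_sub
    (hG : ∀ x ∈ Ici (0 : ℝ), HasDerivWithinAt G (g x) (Ici 0) x)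
    (hg : ∀ x ∈ Ici (0 : ℝ), g x = |G x| - f x) (hG0 : G 0 = 0)
    (hf : ∀ x ∈ Icc 0 b, 0 < f x) : ∀ x ∈ Ioc 0 b, G x < 0 := by
  have hw := fun x (hx : x ∈ Icc 0 b) => hasDerivWithinAt_exp_mul_of_abs_sub hG hg hG0 hf hx
  have hanti : StrictAntiOn (fun s => exp s * G s) (Icc 0 b) := by
    refine strictAntiOn_of_hasDerivWithinAt_neg (f' := fun x => -(exp x * f x)) (convex_Icc 0 b)
      (fun x hx => (hw x hx).continuousWithinAt.mono Icc_subset_Ici_self)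
      (fun x hx => ?_) fun x hx => ?_
    · rw [interior_Icc] at hx ⊢
      exact (hw x (Ioo_subset_Icc_self hx)).mono fun y hy => hy.1.le
    · rw [interior_Icc] at hx
      exact neg_neg_of_pos (mul_pos (exp_pos x) (hf x (Ioo_subset_Icc_self hx)))
  intro x hx
  have hlt := hanti (left_mem_Icc.2 (hx.1.le.trans hx.2)) (Ioc_subset_Icc_self hx) hx.1
  simp only [hG0, mul_zero] at hlt
  exact neg_of_mul_neg_right hlt (exp_pos x).le

lemma le_mul_exp_neg_sub_one_of_hasDerivWithinAt_abs_sub {L : ℝ} (hL : 0 < L)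
    (hG : ∀ x ∈ Ici (0 : ℝ), HasDerivWithinAt G (g x) (Ici 0) x)
    (hg : ∀ x ∈ Ici (0 : ℝ), g x = |G x| - f x) (hG0 : G 0 = 0)
    (hf : ∀ x ∈ Ici (0 : ℝ), L ≤ f x) {x : ℝ} (hx : 0 ≤ x) :
    G x ≤ L * (exp (-x) - 1) := by
  have hw := fun y (hy : y ∈ Icc 0 x) => hasDerivWithinAt_exp_mul_of_abs_sub hG hg hG0
    (fun z hz => hL.trans_le (hf z hz.1)) hy
  have hcmp : exp x * G x ≤ L * (1 - exp x) :=
    image_le_of_deriv_right_le_deriv_boundary (B := fun s => L * (1 - exp s))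
      (fun y hy => (hw y hy).continuousWithinAt.mono Icc_subset_Ici_self)
      (fun y hy => (hw y (Ico_subset_Icc_self hy)).mono (Ici_subset_Ici.2 hy.1))
      (by simp [hG0]) (by fun_prop)
      (fun y _ => (((hasDerivAt_exp y).const_sub 1).const_mul L).hasDerivWithinAt)
      (fun y hy => by nlinarith [hf y hy.1, exp_pos y]) (right_mem_Icc.2 hx)
  calc G x = exp (-x) * (exp x * G x) := by
        rw [← mul_assoc, ← exp_add, neg_add_cancel, exp_zero, one_mul]
    _ ≤ exp (-x) * (L * (1 - exp x)) := mul_le_mul_of_nonneg_left hcmp (exp_pos _).le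
    _ = L * (exp (-x) - 1) := by rw [exp_neg]; field_simp

end AbsODE

lemma abs_abs_rpow_sub_two_mul_self {p : ℝ} (hp : p ≠ 1) (x : ℝ) :
    |(|x| ^ (p - 2) * x)| = |x| ^ (p - 1) := by
  rcases eq_or_ne x 0 with rfl | hx
  · simp [zero_rpow (sub_ne_zero.2 hp)]
  · rw [abs_mul, abs_of_nonneg (rpow_nonneg (abs_nonneg x) _), ← rpow_add_one (abs_ne_zero.2 hx)]
    ring_nf

lemma extTime_le {f : ℝ → ℝ} {s : ℝ} (hs : 0 < s) (hfs : f s = 0) : extTime f ≤ s :=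
  sInf_le ⟨s, hs, hfs, rfl⟩

lemma pos_of_lt_extTime {f : ℝ → ℝ} (hf : ContinuousOn f (Ici 0)) (h0 : 0 < f 0) {r : ℝ}
    (hr : 0 ≤ r) (hrR : (r : EReal) < extTime f) : 0 < f r := by
  by_contra! hle
  obtain ⟨s, hs, hfs⟩ := intermediate_value_Ioc' hr (hf.mono Icc_subset_Ici_self) ⟨hle, h0⟩
  exact hrR.not_ge ((extTime_le hs.1 hfs).trans (EReal.coe_le_coe_iff.2 hs.2))

lemma exists_extTime_eq {f : ℝ → ℝ} (hf : ContinuousOn f (Ici 0)) (h0 : f 0 ≠ 0)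
    (hR : extTime f ≠ ⊤) : ∃ R : ℝ, 0 < R ∧ f R = 0 ∧ extTime f = R := by
  set Z := Ici (0 : ℝ) ∩ f ⁻¹' {0}
  have hZ : IsClosed Z := hf.preimage_isClosed_of_isClosed isClosed_Ici isClosed_singleton
  have hbdd : BddBelow Z := ⟨0, fun _ hs => hs.1⟩
  have hne : Z.Nonempty := by
    contrapose! hR
    refine sInf_eq_top.2 ?_
    rintro _ ⟨r, hr, hfr, -⟩
    exact (notMem_empty r (hR.subset (show r ∈ Z from ⟨hr.le, hfr⟩))).elim
  obtain ⟨hR0, hfR⟩ := hZ.csInf_mem hne hbdd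
  have hRpos : 0 < sInf Z := hR0.lt_of_ne fun h => h0 (h ▸ hfR)
  refine ⟨sInf Z, hRpos, hfR, le_antisymm (extTime_le hRpos hfR) (le_sInf ?_)⟩
  rintro _ ⟨r, hr, hfr, rfl⟩
  exact EReal.coe_le_coe_iff.2 (csInf_le hbdd ⟨hr.le, hfr⟩)

namespace IsSol

variable {p a : ℝ} {f fd gd ψ : ℝ → ℝ}

lemma apply_zero (hf : IsSol p a f fd gd) : f 0 = a := hf.2.2.2.2.2.1

lemma fd_zero (hf : IsSol p a f fd gd) : fd 0 = 0 := hf.2.2.2.2.2.2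

lemma continuousOn (hf : IsSol p a f fd gd) : ContinuousOn f (Ici 0) :=
  fun x hx => (hf.1 x hx).continuousWithinAt

lemma gd_eq_abs_sub (hp : p ≠ 1) (hf : IsSol p a f fd gd) :
    ∀ x ∈ Ici (0 : ℝ), gd x = |(|fd x| ^ (p - 2) * fd x)| - f x := by
  have hG : ContinuousOn (fun s => |fd s| ^ (p - 2) * fd s) (Ici 0) :=
    fun x hx => (hf.2.2.1 x hx).continuousWithinAt
  refine EqOn.of_subset_closure (fun x hx => ?_) hf.2.2.2.1 (hG.abs.sub hf.continuousOn)
    Ioi_subset_Ici_self (closure_Ioi 0).ge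
  rw [abs_abs_rpow_sub_two_mul_self hp]
  linarith [hf.2.2.2.2.1 x hx]

lemma fd_neg (hp : p ≠ 1) (hf : IsSol p a f fd gd) {b : ℝ} (hpos : ∀ x ∈ Icc 0 b, 0 < f x) :
    ∀ x ∈ Ioc 0 b, fd x < 0 := fun x hx =>
  neg_of_mul_neg_right (neg_of_hasDerivWithinAt_abs_sub hf.2.2.1 (hf.gd_eq_abs_sub hp)
    (by simp [hf.fd_zero]) hpos x hx) (rpow_nonneg (abs_nonneg _) _)

lemma strictAntiOn (hp : p ≠ 1) (hf : IsSol p a f fd gd) {b : ℝ}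
    (hpos : ∀ x ∈ Icc 0 b, 0 < f x) : StrictAntiOn f (Icc 0 b) := by
  refine strictAntiOn_of_hasDerivWithinAt_neg (f' := fd) (convex_Icc 0 b)
    (hf.continuousOn.mono Icc_subset_Ici_self) (fun x hx => ?_) fun x hx => ?_
  · rw [interior_Icc] at hx ⊢
    exact (hf.1 x hx.1.le).mono fun y hy => hy.1.le
  · rw [interior_Icc] at hx
    exact hf.fd_neg hp hpos x ⟨hx.1, hx.2.le⟩

lemma exists_lt (hp : 1 < p) (hf : IsSol p a f fd gd) {L : ℝ} (hL : 0 < L) :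
    ∃ x, 0 ≤ x ∧ f x < L := by
  by_contra! hge
  have hp1 : 0 < p - 1 := sub_pos.2 hp
  set c := (L / 2) ^ (p - 1)⁻¹
  have hc : 0 < c := by positivity
  have hfd : ∀ x ∈ Ici (log 2), fd x ≤ -c := by
    intro x hx
    have hx0 : 0 < x := (log_pos one_lt_two).trans_le hx
    have hG := le_mul_exp_neg_sub_one_of_hasDerivWithinAt_abs_sub hL hf.2.2.1
      (hf.gd_eq_abs_sub hp.ne') (by simp [hf.fd_zero]) hge hx0.le
    have hexp : exp (-x) ≤ 1 / 2 := by
      rw [← exp_log (by norm_num : (0 : ℝ) < 1 / 2), one_div, log_inv]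
      exact exp_le_exp.2 (neg_le_neg hx)
    have hGL : L / 2 ≤ |fd x| ^ (p - 1) := by
      rw [← abs_abs_rpow_sub_two_mul_self hp.ne']
      nlinarith [neg_le_abs (|fd x| ^ (p - 2) * fd x)]
    have hcfd : c ≤ |fd x| := by
      rwa [← rpow_le_rpow_iff hc.le (abs_nonneg _) hp1, rpow_inv_rpow (by positivity) hp1.ne']
    rw [abs_of_neg (hf.fd_neg hp.ne' (fun y hy => hL.trans_le (hge y hy.1)) x ⟨hx0, le_rfl⟩)]
      at hcfd
    linarith
  set x₀ := log 2
  have hx₀ : 0 < x₀ := log_pos one_lt_two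
  have hx₁ : x₀ ≤ x₀ + f x₀ / c :=
    le_add_of_nonneg_right (div_nonneg (hL.le.trans (hge x₀ hx₀.le)) hc.le)
  have hlin : f (x₀ + f x₀ / c) ≤ f x₀ - c * (x₀ + f x₀ / c - x₀) :=
    image_le_of_deriv_right_le_deriv_boundary (B := fun x => f x₀ - c * (x - x₀))
      (hf.continuousOn.mono fun y hy => hx₀.le.trans hy.1)
      (fun y hy => (hf.1 y (hx₀.le.trans hy.1)).mono (Ici_subset_Ici.2 (hx₀.le.trans hy.1)))
      (by simp) (by fun_prop)
      (fun y _ => (((hasDerivAt_id y).sub_const x₀).const_mul c).const_sub _ |>.hasDerivWithinAt)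
      (fun y hy => by simpa using hfd y hy.1)
      ⟨hx₁, le_rfl⟩
  rw [add_sub_cancel_left, mul_div_cancel₀ _ hc.ne', sub_self] at hlin
  linarith [hge (x₀ + f x₀ / c) (hx₀.le.trans hx₁)]

lemma exists_lt_of_lt_extTime (hp : 1 < p) (ha : 0 < a) (hf : IsSol p a f fd gd) {L : ℝ}
    (hL : 0 < L) : ∃ r : ℝ, 0 ≤ r ∧ (r : EReal) < extTime f ∧ f r < L := by
  obtain ⟨x, hx, hfx⟩ := hf.exists_lt hp hL
  by_cases hxR : (x : EReal) < extTime f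
  · exact ⟨x, hx, hxR, hfx⟩
  obtain ⟨R, hR, hfR, hRe⟩ := exists_extTime_eq hf.continuousOn (hf.apply_zero ▸ ha.ne')
    (ne_top_of_le_ne_top (EReal.coe_ne_top x) (not_lt.1 hxR))
  have hv : min L a / 2 ∈ Ioo (f R) (f 0) := by
    rw [hfR, hf.apply_zero]
    constructor <;> linarith [min_le_right L a, lt_min hL ha]
  obtain ⟨r, hr, hfr⟩ :=
    intermediate_value_Ioo' hR.le (hf.continuousOn.mono Icc_subset_Ici_self) hv
  refine ⟨r, hr.1.le, hRe ▸ EReal.coe_lt_coe_iff.2 hr.2, ?_⟩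
  rw [hfr]
  linarith [min_le_left L a, lt_min hL ha]

lemma integrableOn_and_integral_eq (hp : 1 < p) (ha : 0 < a) (hf : IsSol p a f fd gd)
    (hrel : PsiRel p a f fd ψ) {r : ℝ} (hr : 0 < r) (hrR : (r : EReal) < extTime f) :
    IntegrableOn (fun z => ψ (1 - z) ^ (-(1 / p))) (Ioo (f r / a) 1) ∧
      ∫ z in (f r / a)..1, ψ (1 - z) ^ (-(1 / p)) = r := by
  have hpos : ∀ x ∈ Icc 0 r, 0 < f x := fun x hx => pos_of_lt_extTime hf.continuousOn
    (hf.apply_zero ▸ ha) hx.1 ((EReal.coe_le_coe_iff.2 hx.2).trans_lt hrR)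
  have hanti : StrictAntiOn (fun x => f x / a) (Icc 0 r) := fun x hx y hy hxy =>
    div_lt_div_of_pos_right (hf.strictAntiOn hp.ne' hpos hx hy hxy) ha
  have himage : (fun x => f x / a) '' Ioo 0 r = Ioo (f r / a) 1 := by
    rw [((hf.continuousOn.mono Icc_subset_Ici_self).div_const a).image_Ioo_of_strictAntiOn
      hr.le hanti, hf.apply_zero, div_self ha.ne']
  have hderiv : ∀ x ∈ Ioo 0 r, HasDerivWithinAt (fun x => f x / a) (fd x / a) (Ioo 0 r) x :=
    fun x hx => ((hf.1 x hx.1.le).mono fun y hy => hy.1.le).div_const a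
  have hinj : InjOn (fun x => f x / a) (Ioo 0 r) := hanti.injOn.mono Ioo_subset_Icc_self
  have hjac : EqOn (fun x => |fd x / a| • ψ (1 - f x / a) ^ (-(1 / p))) 1 (Ioo 0 r) := by
    intro x hx
    simp only [Pi.one_apply, smul_eq_mul]
    have hfd : |fd x| / a ≠ 0 :=
      div_ne_zero (abs_ne_zero.2 (hf.fd_neg hp.ne' hpos x ⟨hx.1, hx.2.le⟩).ne) ha.ne'
    rw [hrel x hx.1.le ((EReal.coe_lt_coe_iff.2 hx.2).trans hrR),
      ← div_rpow (abs_nonneg _) ha.le, ← rpow_mul (by positivity),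
      mul_neg, mul_one_div_cancel (by linarith), rpow_neg_one, abs_div, abs_of_pos ha,
      mul_inv_cancel₀ hfd]
  have hlt : f r / a < 1 := by
    simpa [hf.apply_zero, ha.ne'] using hanti (left_mem_Icc.2 hr.le) (right_mem_Icc.2 hr.le) hr
  rw [intervalIntegral.integral_of_le hlt.le, integral_Ioc_eq_integral_Ioo, ← himage,
    integrableOn_image_iff_integrableOn_abs_deriv_smul measurableSet_Ioo hderiv hinj,
    integral_image_eq_integral_abs_deriv_smul measurableSet_Ioo hderiv hinj,
    integrableOn_congr_fun hjac measurableSet_Ioo, setIntegral_congr_fun measurableSet_Ioo hjac]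
  exact ⟨integrableOn_const measure_Ioo_lt_top.ne, by simp [hr.le]⟩

end IsSol

/-- The function `z ↦ ψ(1-z)^{-1/p}` belongs to `L¹(z₀,1)` for every
`z₀ ∈ (0,1)`, and `∫_{f(r)/a}^{1} ψ(1-z)^{-1/p} dz = r` for every `r ∈ [0,R(a))`. -/
theorem stmt16 (p a : ℝ) (hp : p ∈ Set.Ioo (1:ℝ) 2) (ha : 0 < a)
    (f fd gd ψ : ℝ → ℝ) (hf : IsSol p a f fd gd) (hrel : PsiRel p a f fd ψ) :
    (∀ z₀ ∈ Set.Ioo (0:ℝ) 1,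
      IntegrableOn (fun z => ψ (1-z) ^ (-(1/p))) (Set.Ioc z₀ 1) volume) ∧
    (∀ r : ℝ, 0 ≤ r → (r : EReal) < extTime f →
      ∫ z in (f r / a)..1, ψ (1-z) ^ (-(1/p)) = r) := by
  refine ⟨fun z₀ hz₀ => ?_, fun r hr hrR => ?_⟩
  · obtain ⟨r, hr, hrR, hfr⟩ := hf.exists_lt_of_lt_extTime hp.1 ha (mul_pos ha hz₀.1)
    have hr0 : 0 < r := hr.lt_of_ne <| by
      rintro rfl
      nlinarith [hf.apply_zero, hz₀.2]
    have hsub : Ioo z₀ 1 ⊆ Ioo (f r / a) 1 := Ioo_subset_Ioo_left ((div_lt_iff₀' ha).2 hfr).le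
    rw [integrableOn_Ioc_iff_integrableOn_Ioo]
    exact (hf.integrableOn_and_integral_eq hp.1 ha hrel hr0 hrR).1.mono_set hsub
  rcases hr.eq_or_lt with rfl | hr0
  · simp [hf.apply_zero, ha.ne']
  exact (hf.integrableOn_and_integral_eq hp.1 ha hrel hr0 hrR).2
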